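/- arXiv:2512.07592 — 2 statements merged into one kernel-verified Lean document; each statement's English description precedes it below -/
import Mathlib

section
/- Let G=(V,E) be a finite simple connected graph with at least two vertices. Then T(G) = { x ∈ ℝ^V : there exists y ∈ ℝ^E with y_e ≥ 0 for every e ∈ E, y(δ(v)) ≤ x_v for every v ∈ V, and x_u + x_v − y_{uv} ≤ 1 for every edge uv ∈ E }. -/
/-! Given `x ∈ T(G)`, take the least feasible `y`, namely `y_{uv} = max (x_u + x_v - 1) 0`. Its
load `y(δ(v))` is `Σ_{u ∈ W} (x_u + x_v - 1)` over the neighbours `W` of `v` where it is positive,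
and the star inequality for `(v, W)` bounds this by `x_v`. Conversely, summing the edge
inequalities `x_v + x_w - y_{wv} ≤ 1` over `v ∈ W ⊆ N(w)` leaves `Σ_{v ∈ W} y_{wv} ≤ y(δ(w)) ≤ x_w`,
which is the star inequality for `(w, W)`; and `x_v ≤ 1` follows from a single edge at `v`, which
exists because `G` is connected with at least two vertices. -/

open Finset
open scoped Classical

noncomputable section

variable {V : Type*} [Fintype V]

/-- A co-2-plex: a set of vertices inducing a subgraph of maximum degree at most 1. -/
def IsCo2Plex {α : Type*} (G : SimpleGraph α) (S : Finset α) : Prop :=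
  ∀ u ∈ S, (S.filter fun v => G.Adj u v).card ≤ 1

/-- Incidence vector of a vertex set. -/
def chiV {α : Type*} (S : Finset α) : α → ℝ := fun v => if v ∈ S then 1 else 0

/-- Incidence vector (on edges) of the set of edges with both endpoints in `S`. -/
def chiE {α : Type*} (G : SimpleGraph α) (S : Finset α) : G.edgeSet → ℝ :=
  fun e => if ∀ v ∈ (e : Sym2 α), v ∈ S then 1 else 0

/-- The co-2-plex polytope. -/
def co2PlexPolytope (G : SimpleGraph V) : Set (V → ℝ) :=
  convexHull ℝ {x | ∃ S : Finset V, IsCo2Plex G S ∧ x = chiV S}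

/-- The extended co-2-plex polytope. -/
def co2PlexPolytopeExt (G : SimpleGraph V) : Set ((V → ℝ) × (G.edgeSet → ℝ)) :=
  convexHull ℝ {p | ∃ S : Finset V, IsCo2Plex G S ∧ p = (chiV S, chiE G S)}

/-- δ(v): edges incident to `v`. -/
def inc (G : SimpleGraph V) (v : V) : Finset G.edgeSet :=
  univ.filter fun e => v ∈ (e : Sym2 V)

/-- E(W): edges with both endpoints in W. -/
def edgesIn (G : SimpleGraph V) (W : Finset V) : Finset G.edgeSet :=
  univ.filter fun e => ∀ v ∈ (e : Sym2 V), v ∈ W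

/-- E(V \ W): edges with both endpoints outside W. -/
def edgesOut (G : SimpleGraph V) (W : Finset V) : Finset G.edgeSet :=
  univ.filter fun e => ∀ v ∈ (e : Sym2 V), v ∉ W

/-- δ(W): edges with exactly one endpoint in W. -/
def edgesCut (G : SimpleGraph V) (W : Finset V) : Finset G.edgeSet :=
  univ.filter fun e => (∃ v ∈ (e : Sym2 V), v ∈ W) ∧ ∃ v ∈ (e : Sym2 V), v ∉ W

/-- The utter graph of `G`. -/
def utter (G : SimpleGraph V) : SimpleGraph (V ⊕ G.edgeSet) where
  Adj a b :=
    match a, b with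
    | Sum.inl u, Sum.inl v => G.Adj u v
    | Sum.inl w, Sum.inr e => w ∈ (e : Sym2 V) ∨ ∃ z ∈ (e : Sym2 V), G.Adj w z
    | Sum.inr e, Sum.inl w => w ∈ (e : Sym2 V) ∨ ∃ z ∈ (e : Sym2 V), G.Adj w z
    | Sum.inr e, Sum.inr f =>
        e ≠ f ∧ ((∃ v, v ∈ (e : Sym2 V) ∧ v ∈ (f : Sym2 V)) ∨
          ∃ a ∈ (e : Sym2 V), ∃ b ∈ (f : Sym2 V), G.Adj a b)
  symm := by
    refine ⟨?_⟩
    rintro (u | e) (v | f) h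
    · exact h.symm
    · exact h
    · exact h
    · obtain ⟨hne, h⟩ := h
      refine ⟨hne.symm, ?_⟩
      rcases h with ⟨v, hv1, hv2⟩ | ⟨a, ha, b, hb, hab⟩
      · exact Or.inl ⟨v, hv2, hv1⟩
      · exact Or.inr ⟨b, hb, a, ha, hab.symm⟩
  loopless := by
    refine ⟨?_⟩
    rintro (u | e) h
    · exact G.loopless.irrefl u h
    · exact h.1 rfl

/-- An utter clique: a pair [W, F] whose union is a clique of the utter graph. -/
def IsUtterClique (G : SimpleGraph V) (W : Finset V) (F : Finset G.edgeSet) : Prop :=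
  (utter G).IsClique (Sum.inl '' (W : Set V) ∪ Sum.inr '' (F : Set G.edgeSet))

/-- A maximal utter clique. -/
def IsMaxUtterClique (G : SimpleGraph V) (W : Finset V) (F : Finset G.edgeSet) : Prop :=
  IsUtterClique G W F ∧
    (∀ v ∉ W, ¬ IsUtterClique G (insert v W) F) ∧
    (∀ e ∉ F, ¬ IsUtterClique G W (insert e F))

/-- The contraction G/F: vertices are the connected components of the spanning
subgraph (V, F); two components are adjacent iff some edge of `G` joins them. -/
def contract {α : Type*} (G : SimpleGraph α) (F : Set (Sym2 α)) :
    SimpleGraph (SimpleGraph.fromEdgeSet F).ConnectedComponent where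
  Adj c d := c ≠ d ∧ ∃ u v, G.Adj u v ∧
      (SimpleGraph.fromEdgeSet F).connectedComponentMk u = c ∧
      (SimpleGraph.fromEdgeSet F).connectedComponentMk v = d
  symm := by
    refine ⟨?_⟩
    rintro c d ⟨hne, u, v, h, hu, hv⟩
    exact ⟨hne.symm, v, u, h.symm, hv, hu⟩
  loopless := by
    refine ⟨?_⟩
    rintro c ⟨hne, _⟩
    exact hne rfl

/-- A graph is perfect if every induced subgraph has chromatic number equal to
its clique number. -/
def IsPerfect {α : Type*} (G : SimpleGraph α) : Prop :=
  ∀ s : Set α, (G.induce s).chromaticNumber = ((G.induce s).cliqueNum : ℕ∞)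

/-- A graph is contraction perfect if all its contractions (by edge subsets) are perfect. -/
def ContractionPerfect (G : SimpleGraph V) : Prop :=
  ∀ F : Set (Sym2 V), F ⊆ G.edgeSet → IsPerfect (contract G F)

/-- Chordal: no induced cycle of length at least 4. -/
def Chordal (G : SimpleGraph V) : Prop :=
  ∀ n, 4 ≤ n → IsEmpty (SimpleGraph.cycleGraph n ↪g G)

/-- Maximal clique (as a finset). -/
def IsMaxCliqueF (G : SimpleGraph V) (K : Finset V) : Prop :=
  G.IsClique (K : Set V) ∧ ∀ K' : Finset V, G.IsClique (K' : Set V) → K ⊆ K' → K = K'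

/-- A 2-plex: every vertex of the induced subgraph has degree at least |K| - 2 in it. -/
def Is2Plex (G : SimpleGraph V) (K : Finset V) : Prop :=
  ∀ v ∈ K, K.card - 2 ≤ (K.filter fun u => G.Adj v u).card

/-- α₂(G[W]): the maximum cardinality of a co-2-plex contained in `W`. -/
def co2plexNumOn (G : SimpleGraph V) (W : Finset V) : ℕ :=
  Finset.univ.sup fun S : Finset V => if S ⊆ W ∧ IsCo2Plex G S then S.card else 0

/-- Facet-defining inequality of a full-dimensional polytope in ℝ^α: a valid
inequality whose tight points contain `card α` affinely independent points. -/
def IsFacet {α : Type*} [Fintype α] (P : Set (α → ℝ)) (a : α → ℝ) (c : ℝ) : Prop :=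
  (∀ x ∈ P, ∑ v, a v * x v ≤ c) ∧
  ∃ f : Fin (Fintype.card α) → (α → ℝ),
    AffineIndependent ℝ f ∧ ∀ i, f i ∈ P ∧ ∑ v, a v * f i v = c

/-- The polytope T(G) given by bounds and the star inequalities. -/
def TPoly (G : SimpleGraph V) [DecidableRel G.Adj] : Set (V → ℝ) :=
  {x | (∀ v, 0 ≤ x v ∧ x v ≤ 1) ∧
    ∀ (w : V), ∀ W ⊆ G.neighborFinset w,
      ∑ v ∈ W, x v + ((W.card : ℝ) - 1) * x w ≤ (W.card : ℝ)}

/-- Total dual integrality of the system `A x ≤ b`. -/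
def IsTDI {ι κ : Type*} [Fintype ι] [Fintype κ] (A : ι → κ → ℝ) (b : ι → ℝ) : Prop :=
  ∀ c : κ → ℤ, ∀ m : ℝ,
    IsGreatest {t | ∃ x : κ → ℝ, (∀ i, ∑ j, A i j * x j ≤ b i) ∧ t = ∑ j, (c j : ℝ) * x j} m →
    ∃ π : ι → ℤ, (∀ i, 0 ≤ π i) ∧ (∀ j, ∑ i, (π i : ℝ) * A i j = (c j : ℝ)) ∧
      ∑ i, (π i : ℝ) * b i = m


def edgeSystemProj (G : SimpleGraph V) : Set (V → ℝ) :=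
  {x | ∃ y : G.edgeSet → ℝ,
    (∀ e : G.edgeSet, 0 ≤ y e) ∧
    (∀ v : V, ∑ e ∈ inc G v, y e ≤ x v) ∧
    (∀ (u v : V) (h : G.Adj u v), x u + x v - y ⟨s(u, v), G.mem_edgeSet.mpr h⟩ ≤ 1)}

lemma sum_max_zero_eq_sum_filter_pos {ι M : Type*} [AddCommMonoid M] [LinearOrder M]
    (s : Finset ι) (g : ι → M) :
    ∑ i ∈ s, max (g i) 0 = ∑ i ∈ s with 0 < g i, g i := by
  rw [sum_filter]
  refine sum_congr rfl fun i _ => ?_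
  split_ifs with h
  · exact max_eq_left h.le
  · exact max_eq_right (not_lt.mp h)

lemma sum_inc_eq_sum_neighborFinset {M : Type*} [AddCommMonoid M] (G : SimpleGraph V)
    [DecidableRel G.Adj] (w : V) (f : Sym2 V → M) :
    ∑ e ∈ inc G w, f e = ∑ v ∈ G.neighborFinset w, f s(w, v) := by
  have mem_of_mem_inc {e : G.edgeSet} (he : e ∈ inc G w) : w ∈ (e : Sym2 V) := by
    simpa [inc] using he
  refine sum_bij' (fun e he => Sym2.Mem.other (mem_of_mem_inc he))
    (fun v hv => ⟨s(w, v), (G.mem_neighborFinset w v).mp hv⟩) (fun e he => ?_)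
    (fun v _ => by simp [inc]) (fun e he => ?_) (fun v _ => ?_) (fun e he => ?_)
  · rw [G.mem_neighborFinset, ← G.mem_edgeSet, Sym2.other_spec (mem_of_mem_inc he)]
    exact e.2
  · exact Subtype.ext (Sym2.other_spec (mem_of_mem_inc he))
  · exact Sym2.congr_right.mp (Sym2.other_spec (Sym2.mem_mk_left w v))
  · rw [Sym2.other_spec (mem_of_mem_inc he)]

section

variable {G : SimpleGraph V} {x : V → ℝ}

lemma le_sum_inc {y : G.edgeSet → ℝ} (hy : ∀ e, 0 ≤ y e) {e : G.edgeSet} {v : V}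
    (hv : v ∈ (e : Sym2 V)) : y e ≤ ∑ e' ∈ inc G v, y e' :=
  single_le_sum (fun e' _ => hy e') (by simpa [inc] using hv)

lemma le_one_of_mem_edgeSystemProj (hx : x ∈ edgeSystemProj G) {v u : V} (hvu : G.Adj v u) :
    x v ≤ 1 := by
  obtain ⟨y, hy, hload, hedge⟩ := hx
  have := le_sum_inc hy (e := ⟨s(v, u), G.mem_edgeSet.mpr hvu⟩) (Sym2.mem_mk_right v u)
  linarith [hedge v u hvu, hload u]

variable [DecidableRel G.Adj]

lemma sum_neighborFinset_max_le_of_mem_TPoly (hx : x ∈ TPoly G) (v : V) :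
    ∑ u ∈ G.neighborFinset v, max (x v + x u - 1) 0 ≤ x v := by
  set W := {u ∈ G.neighborFinset v | 0 < x v + x u - 1}
  have hstar := hx.2 v W (filter_subset _ _)
  calc ∑ u ∈ G.neighborFinset v, max (x v + x u - 1) 0
      = ∑ u ∈ W, (x v + x u - 1) := sum_max_zero_eq_sum_filter_pos _ _
    _ = ∑ u ∈ W, x u + ((#W : ℝ) - 1) * x v - #W + x v := by
      rw [sum_sub_distrib, sum_add_distrib]
      simp only [sum_const, nsmul_eq_mul, mul_one]
      ring
    _ ≤ x v := by linarith

lemma TPoly_subset_edgeSystemProj : TPoly G ⊆ edgeSystemProj G := by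
  intro x hx
  let excess : Sym2 V → ℝ :=
    Sym2.lift ⟨fun u v => max (x u + x v - 1) 0, fun u v => by simp only [add_comm (x u)]⟩
  refine ⟨fun e => excess e, fun e => ?_, fun v => ?_, fun u v _ => ?_⟩
  · exact Sym2.ind (f := fun z => 0 ≤ excess z) (fun u v => le_max_right _ _) e
  · rw [sum_inc_eq_sum_neighborFinset G v excess]
    exact sum_neighborFinset_max_le_of_mem_TPoly hx v
  · exact sub_le_comm.mp (le_max_left (x u + x v - 1) 0)

lemma star_le_of_mem_edgeSystemProj (hx : x ∈ edgeSystemProj G) {w : V} {W : Finset V}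
    (hW : W ⊆ G.neighborFinset w) :
    ∑ v ∈ W, x v + ((#W : ℝ) - 1) * x w ≤ #W := by
  obtain ⟨y, hy, hload, hedge⟩ := hx
  set Y : Sym2 V → ℝ := Function.extend Subtype.val y 0
  have hY (e : G.edgeSet) : Y e = y e := Subtype.val_injective.extend_apply y 0 e
  have hY_nonneg (z : Sym2 V) : 0 ≤ Y z := by
    by_cases hz : ∃ e : G.edgeSet, ↑e = z
    · obtain ⟨e, rfl⟩ := hz
      exact (hY e).symm ▸ hy e
    · simp only [Y, Function.extend_apply' _ _ _ hz, Pi.zero_apply, le_refl]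
  have hadj {v : V} (hv : v ∈ W) : G.Adj w v := (G.mem_neighborFinset w v).mp (hW hv)
  have hedges : ∑ v ∈ W, (x v + x w - Y s(w, v)) ≤ #W := by
    calc ∑ v ∈ W, (x v + x w - Y s(w, v)) ≤ ∑ _v ∈ W, (1 : ℝ) := by
          refine sum_le_sum fun v hv => ?_
          have := hedge w v (hadj hv)
          rw [← hY] at this
          linarith
      _ = #W := by simp
  have hcenter : ∑ v ∈ W, Y s(w, v) ≤ x w :=
    calc ∑ v ∈ W, Y s(w, v) ≤ ∑ v ∈ G.neighborFinset w, Y s(w, v) :=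
          sum_le_sum_of_subset_of_nonneg hW fun v _ _ => hY_nonneg _
      _ = ∑ e ∈ inc G w, y e := by
          rw [← sum_inc_eq_sum_neighborFinset G w Y]
          exact sum_congr rfl fun e _ => hY e
      _ ≤ x w := hload w
  rw [sum_sub_distrib, sum_add_distrib, sum_const, nsmul_eq_mul] at hedges
  linarith

lemma edgeSystemProj_subset_TPoly (hconn : G.Connected) (hcard : 1 < Fintype.card V) :
    edgeSystemProj G ⊆ TPoly G := by
  intro x hx
  have : Nontrivial V := Fintype.one_lt_card_iff_nontrivial.mp hcard
  refine ⟨fun v => ⟨?_, ?_⟩, fun w W hW => star_le_of_mem_edgeSystemProj hx hW⟩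
  · obtain ⟨y, hy, hload, -⟩ := hx
    exact (sum_nonneg fun e _ => hy e).trans (hload v)
  · obtain ⟨u, hvu⟩ := hconn.preconnected.exists_adj_of_nontrivial v
    exact le_one_of_mem_edgeSystemProj hx hvu

end

/-- T(G) is the projection onto the x-space of the system
y ≥ 0, y(δ(v)) ≤ x_v, and x_u + x_v − y_{uv} ≤ 1. -/
theorem stmt10 (G : SimpleGraph V) [DecidableRel G.Adj] (hconn : G.Connected)
    (hcard : 1 < Fintype.card V) :
    TPoly G = {x : V → ℝ | ∃ y : G.edgeSet → ℝ,
      (∀ e : G.edgeSet, 0 ≤ y e) ∧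
      (∀ v : V, ∑ e ∈ inc G v, y e ≤ x v) ∧
      (∀ (u v : V) (h : G.Adj u v),
        x u + x v - y ⟨s(u, v), G.mem_edgeSet.mpr h⟩ ≤ 1)} :=
  TPoly_subset_edgeSystemProj.antisymm (edgeSystemProj_subset_TPoly hconn hcard)

end
end

section
/- Let G=(V,E) be a finite simple graph and let u, v be two distinct vertices with uv ∉ E and N_G(u) = N_G(v) (false twins). Let G' be the graph obtained from G by adding the edge uv. Then a set S ⊆ V is a co-2-plex of G' if and only if it is a co-2-plex of G. -/
open Finset
open scoped Classical

noncomputable section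

variable {V : Type*} [Fintype V]

open SimpleGraph

theorem isCo2Plex_iff {α : Type*} {G : SimpleGraph α} {S : Finset α} :
    IsCo2Plex G S ↔ ∀ w ∈ S, ∀ x ∈ S, ∀ y ∈ S, G.Adj w x → G.Adj w y → x = y := by
  simp only [IsCo2Plex, Finset.card_le_one, Finset.mem_filter]
  grind

namespace IsCo2Plex

variable {α : Type*} {G H : SimpleGraph α} {S : Finset α}

theorem anti (hGH : G ≤ H) (h : IsCo2Plex H S) : IsCo2Plex G S :=
  isCo2Plex_iff.2 fun w hw x hx y hy hwx hwy =>
    isCo2Plex_iff.1 h w hw x hx y hy (hGH hwx) (hGH hwy)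

/-- Two false twins in a co-2-plex would be two neighbours of any common neighbour. -/
theorem not_adj_of_twins (h : IsCo2Plex G S) {u v : α} (hne : u ≠ v)
    (htwin : G.neighborSet u = G.neighborSet v) (hu : u ∈ S) (hv : v ∈ S) {x : α}
    (hx : x ∈ S) : ¬ G.Adj u x := fun hux =>
  hne <| isCo2Plex_iff.1 h x hx u hu v hv hux.symm
    (show x ∈ G.neighborSet v from htwin ▸ hux).symm

end IsCo2Plex

theorem stmt12_general {α : Type*} (G : SimpleGraph α) (u v : α) (hne : u ≠ v)
    (htwin : G.neighborSet u = G.neighborSet v)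
    (S : Finset α) :
    IsCo2Plex (G ⊔ SimpleGraph.fromEdgeSet {s(u, v)}) S ↔ IsCo2Plex G S := by
  refine ⟨fun h => h.anti le_sup_left, fun h => isCo2Plex_iff.2 ?_⟩
  have hu_no_adj := h.not_adj_of_twins hne htwin
  have hv_no_adj := h.not_adj_of_twins hne.symm htwin.symm
  have hG := isCo2Plex_iff.1 h
  change ∀ w ∈ S, ∀ x ∈ S, ∀ y ∈ S, (G ⊔ edge u v).Adj w x → (G ⊔ edge u v).Adj w y → x = y
  simp only [sup_adj, edge_adj]
  -- two new edges at `w` end at the same vertex; a new and an old edge at `w` cannot both lie in `S`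
  grind

/-- Adding an edge between two false twins does not change the
set of co-2-plexes. -/
theorem stmt12 {α : Type*} (G : SimpleGraph α) (u v : α) (hne : u ≠ v)
    (hadj : ¬ G.Adj u v) (htwin : G.neighborSet u = G.neighborSet v)
    (S : Finset α) :
    IsCo2Plex (G ⊔ SimpleGraph.fromEdgeSet {s(u, v)}) S ↔ IsCo2Plex G S :=
  stmt12_general G u v hne htwin S

end
end
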